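/- A tensor A ∈ ℂ^{n×n×p} satisfies ⟨X, A * X⟩ ≥ 0 for all X ∈ ℂ^{n×1×p} if and only if there exists a tensor M ∈ ℂ^{n×n×p} with A = M * M*, where M* is the tensor conjugate transpose. Equivalently, bcirc(A) is a positive semidefinite matrix iff bcirc(A) = C C* for some matrix C of block circulant form. -/

import Mathlib

open Matrix ComplexOrder

/-- The block circulant matrix of a complex third-order tensor. -/
noncomputable def bcirc {n p : ℕ} (A : Fin p → Matrix (Fin n) (Fin n) ℂ) :
    Matrix (Fin p × Fin n) (Fin p × Fin n) ℂ :=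
  fun ki lj => A (ki.1 - lj.1) ki.2 lj.2

/-- Unfolding of an n×1×p tensor into a vector in ℂ^{np}. -/
noncomputable def unfoldVec {n p : ℕ} (X : Fin p → Fin n → ℂ) : Fin p × Fin n → ℂ :=
  fun ki => X ki.1 ki.2

/-- The T-product of two n×n×p tensors. -/
noncomputable def tProd {n p : ℕ} (M N : Fin p → Matrix (Fin n) (Fin n) ℂ) :
    Fin p → Matrix (Fin n) (Fin n) ℂ :=
  fun k i j => ∑ l : Fin p, ∑ r : Fin n, M (k - l) i r * N l r j

/-- The tensor conjugate transpose. -/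
noncomputable def tConjTranspose {n p : ℕ} (M : Fin p → Matrix (Fin n) (Fin n) ℂ) :
    Fin p → Matrix (Fin n) (Fin n) ℂ :=
  fun k => (M (-k))ᴴ

/-- A complex matrix with nonnegative quadratic form is Hermitian. -/
lemma isHermitian_of_quadratic_nonneg {m : Type*} [Fintype m] [DecidableEq m]
    (B : Matrix m m ℂ) (h : ∀ x : m → ℂ, 0 ≤ star x ⬝ᵥ B *ᵥ x) : B.IsHermitian := by
  have key : ∀ x : m → ℂ, star x ⬝ᵥ B *ᵥ x = star x ⬝ᵥ Bᴴ *ᵥ x := by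
    intro x
    have h1 : star (star x ⬝ᵥ B *ᵥ x) = star x ⬝ᵥ B *ᵥ x := by
      have := h x
      rw [Complex.nonneg_iff] at this
      exact Complex.conj_eq_iff_im.mpr (le_antisymm (le_of_eq this.2.symm) (le_of_eq this.2))
    calc star x ⬝ᵥ B *ᵥ x = star (star x ⬝ᵥ B *ᵥ x) := h1.symm
      _ = star x ⬝ᵥ Bᴴ *ᵥ x := by
          rw [star_dotProduct, star_mulVec, star_star, ← dotProduct_mulVec]
  have heq : Matrix.toEuclideanLin B = Matrix.toEuclideanLin Bᴴ := by
    rw [← ext_inner_map]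
    intro x
    simp only [Matrix.toEuclideanLin_apply]
    rw [EuclideanSpace.inner_eq_star_dotProduct, EuclideanSpace.inner_eq_star_dotProduct]
    simp only [Equiv.apply_symm_apply]
    rw [dotProduct_comm, dotProduct_comm x.ofLp]
    rw [star_dotProduct]
    rw [star_dotProduct (v := Bᴴ *ᵥ _)]
    exact congrArg star (key _)
  have hB : B = Bᴴ := Matrix.toEuclideanLin.injective heq
  exact hB.symm

section PsdSqrtPort

open scoped MatrixOrder

/-- Square root of a positive semidefinite complex matrix (via the CFC). -/
noncomputable def Matrix.PosSemidef.sqrt {m : Type*} [Fintype m] [DecidableEq m]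
    {B : Matrix m m ℂ} (_hB : B.PosSemidef) : Matrix m m ℂ :=
  CFC.sqrt B

lemma Matrix.PosSemidef.posSemidef_sqrt {m : Type*} [Fintype m] [DecidableEq m]
    {B : Matrix m m ℂ} (hB : B.PosSemidef) : hB.sqrt.PosSemidef :=
  (CFC.sqrt_nonneg B).posSemidef

lemma Matrix.PosSemidef.sq_sqrt {m : Type*} [Fintype m] [DecidableEq m]
    {B : Matrix m m ℂ} (hB : B.PosSemidef) : hB.sqrt ^ 2 = B :=
  CFC.sq_sqrt B hB.nonneg

lemma Matrix.PosSemidef.sqrt_mul_self {m : Type*} [Fintype m] [DecidableEq m]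
    {B : Matrix m m ℂ} (hB : B.PosSemidef) : hB.sqrt * hB.sqrt = B :=
  CFC.sqrt_mul_sqrt_self B hB.nonneg

lemma Matrix.PosSemidef.eq_sqrt_of_sq_eq {m : Type*} [Fintype m] [DecidableEq m]
    {R : Matrix m m ℂ} (hR : R.PosSemidef) {B : Matrix m m ℂ} (hB : B.PosSemidef)
    (h : R ^ 2 = B) : R = hB.sqrt :=
  (CFC.sqrt_unique (by rw [← sq]; exact h) hR.nonneg).symm

end PsdSqrtPort

lemma bcirc_tProd {n p : ℕ} [NeZero p] (M N : Fin p → Matrix (Fin n) (Fin n) ℂ) :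
    bcirc (tProd M N) = bcirc M * bcirc N := by
  ext ⟨k, i⟩ ⟨l, j⟩
  rw [Matrix.mul_apply, Fintype.sum_prod_type]
  show ∑ m : Fin p, ∑ r : Fin n, M (k - l - m) i r * N m r j
      = ∑ m : Fin p, ∑ r : Fin n, M (k - m) i r * N (m - l) r j
  refine Fintype.sum_equiv (Equiv.addRight l) _ _ fun m => ?_
  have h1 : k - (m + l) = k - l - m := by
    rw [sub_sub, add_comm]
  have h2 : m + l - l = m := add_sub_cancel_right m l
  simp only [Equiv.coe_addRight, h1, h2]

lemma bcirc_tConjTranspose {n p : ℕ} [NeZero p] (M : Fin p → Matrix (Fin n) (Fin n) ℂ) :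
    bcirc (tConjTranspose M) = (bcirc M)ᴴ := by
  ext ⟨k, i⟩ ⟨l, j⟩
  show (M (-(k - l)))ᴴ i j = star (M (l - k) j i)
  rw [neg_sub]
  rfl

/-- A tensor A satisfies ⟨X, A * X⟩ ≥ 0 for all X ∈ ℂ^{n×1×p} iff A = M * M* for
some tensor M (where ⟨X, Y⟩ = unfold(X)* unfold(Y) and A * X = fold(bcirc(A)·unfold(X))). -/
theorem tensor_psd_iff_factorization {n p : ℕ}
    (A : Fin p → Matrix (Fin n) (Fin n) ℂ) :
    (∀ X : Fin p → Fin n → ℂ,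
        0 ≤ star (unfoldVec X) ⬝ᵥ (bcirc A *ᵥ unfoldVec X)) ↔
      ∃ M : Fin p → Matrix (Fin n) (Fin n) ℂ, A = tProd M (tConjTranspose M) := by
  rcases Nat.eq_zero_or_pos p with hp | hp
  · subst hp
    constructor
    · intro _
      exact ⟨A, funext fun k => k.elim0⟩
    · intro _ X
      have hz : star (unfoldVec X) ⬝ᵥ (bcirc A *ᵥ unfoldVec X) = 0 := by
        simp [dotProduct]
      rw [hz]
  haveI : NeZero p := ⟨hp.ne'⟩
  constructor
  · intro h
    have hquad : ∀ v : Fin p × Fin n → ℂ, 0 ≤ star v ⬝ᵥ bcirc A *ᵥ v := by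
      intro v
      have hv : unfoldVec (fun k i => v (k, i)) = v := funext fun ki => by cases ki; rfl
      have := h (fun k i => v (k, i))
      rwa [hv] at this
    have hPSD : (bcirc A).PosSemidef :=
      .of_dotProduct_mulVec_nonneg (isHermitian_of_quadratic_nonneg _ hquad) hquad
    set R := hPSD.sqrt with hRdef
    have hRpsd : R.PosSemidef := hPSD.posSemidef_sqrt
    have hshift : ∀ (m k l : Fin p) (i j : Fin n),
        R (k + m, i) (l + m, j) = R (k, i) (l, j) := by
      intro m k l i j
      set e : (Fin p × Fin n) ≃ (Fin p × Fin n) :=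
        (Equiv.addRight m).prodCongr (Equiv.refl (Fin n)) with he
      have hBsub : (bcirc A).submatrix e e = bcirc A := by
        ext ⟨k', i'⟩ ⟨l', j'⟩
        show A ((k' + m) - (l' + m)) i' j' = A (k' - l') i' j'
        rw [add_sub_add_right_eq_sub]
      have hsq : (R.submatrix e e) ^ 2 = bcirc A := by
        rw [pow_two, submatrix_mul_equiv, ← pow_two, hPSD.sq_sqrt, hBsub]
      have heqR : R.submatrix e e = R :=
        (hRpsd.submatrix e).eq_sqrt_of_sq_eq hPSD hsq
      have := congrFun (congrFun heqR (k, i)) (l, j)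
      exact this
    have hRM : ∀ (k l : Fin p) (i j : Fin n),
        R (k, i) (l, j) = R (k - l, i) (0, j) := by
      intro k l i j
      have := hshift l (k - l) 0 i j
      rwa [sub_add_cancel, zero_add] at this
    refine ⟨fun k i j => R (k, i) (0, j), ?_⟩
    funext k
    ext i j
    have hA : A k i j = (R * R) (k, i) (0, j) := by
      rw [hPSD.sqrt_mul_self]
      show A k i j = A (k - 0) i j
      rw [sub_zero]
    rw [show (tProd (fun k i j => R (k, i) (0, j))
        (tConjTranspose fun k i j => R (k, i) (0, j)) k i j)
        = ∑ l : Fin p, ∑ r : Fin n,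
            R (k - l, i) (0, r) * star (R (-l, j) (0, r)) from rfl]
    rw [hA, Matrix.mul_apply, Fintype.sum_prod_type]
    refine Finset.sum_congr rfl fun l _ => Finset.sum_congr rfl fun r _ => ?_
    congr 1
    · exact hRM k l i r
    · have h1 : R (l, r) (0, j) = star (R (0, j) (l, r)) := (hRpsd.1.apply _ _).symm
      rw [h1, hRM 0 l j r, zero_sub]
  · rintro ⟨M, rfl⟩
    intro X
    rw [bcirc_tProd, bcirc_tConjTranspose]
    exact (posSemidef_self_mul_conjTranspose (bcirc M)).dotProduct_mulVec_nonneg _
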